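/- For an odd prime d, the phase-space point operators A(p,q) = w(p,q) A w(p,q)†, with A = Σ_x |−x⟩⟨x|, form a Hermitian orthonormal family with respect to the inner product ⟨M,N⟩ = (1/d) Tr(M† N): each A(p,q) is Hermitian and (1/d)Tr[A(p,q)A(p',q')] = δ_{pp'}δ_{qq'}. -/

import Mathlib

open Matrix Kronecker BigOperators
open scoped ComplexOrder

noncomputable def omega_d (d : ℕ) : ℂ := Complex.exp (2 * Real.pi * Complex.I / d)

noncomputable def Xmat (d : ℕ) : Matrix (ZMod d) (ZMod d) ℂ :=
  Matrix.of fun k l => if k = l + 1 then 1 else 0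

noncomputable def Zmat (d : ℕ) : Matrix (ZMod d) (ZMod d) ℂ :=
  Matrix.diagonal fun k => omega_d d ^ k.val

noncomputable def weyl (d : ℕ) [NeZero d] (p q : ZMod d) : Matrix (ZMod d) (ZMod d) ℂ :=
  omega_d d ^ ((-(2⁻¹ : ZMod d) * p * q).val) • (Zmat d ^ p.val * Xmat d ^ q.val)

noncomputable def Amat (d : ℕ) : Matrix (ZMod d) (ZMod d) ℂ :=
  Matrix.of fun k l => if k = -l then 1 else 0

noncomputable def phasePoint (d : ℕ) [NeZero d] (p q : ZMod d) :
    Matrix (ZMod d) (ZMod d) ℂ := weyl d p q * Amat d * (weyl d p q)ᴴ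


/-!
Entrywise, `A(p,q)ₖₗ = [k + l = 2q] ω^{p(k-l)}`: the phase `ω^{-2⁻¹pq}` of `w(p,q)` cancels
against its conjugate, `X^q` reflects the parity operator about `q`, and `Z^p` twists it by the
character `x ↦ ω^{px}`. Hence `Tr[A(p,q) A(p',q')]` vanishes unless `2q = 2q'`, and is then the
character sum `∑ₖ ω^{2(p-p')(k-q)}`, which by orthogonality is `d` if `2p = 2p'` and `0`
otherwise. For odd `d`, `2` is a unit mod `d`, so these conditions become `q = q'` and `p = p'`.
-/

open ZMod

lemma Amat_isHermitian (d : ℕ) : (Amat d).IsHermitian := by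
  ext k l
  simp [Amat, eq_neg_iff_add_eq_zero, add_comm, apply_ite star]

lemma isUnit_two_of_odd {d : ℕ} (hodd : Odd d) : IsUnit (2 : ZMod d) := by
  exact_mod_cast (isUnit_iff_coprime 2 d).mpr (Nat.coprime_two_left.mpr hodd)

section

variable {d : ℕ} [NeZero d]

lemma omega_d_pow_val (x : ZMod d) : omega_d d ^ x.val = stdAddChar x := by
  rw [stdAddChar_apply, toCircle_apply, omega_d, ← Complex.exp_nat_mul]
  ring_nf

lemma Xmat_pow_apply (n : ℕ) (k l : ZMod d) :
    (Xmat d ^ n) k l = if k = l + n then 1 else 0 := by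
  induction n generalizing l with
  | zero => simp [one_apply]
  | succ n ih =>
    rw [pow_succ, mul_apply, Finset.sum_eq_single (l + 1), ih]
    · simp [Xmat, add_assoc, add_comm (1 : ZMod d)]
    · intro j _ hj
      simp [Xmat, hj]
    · simp

lemma weyl_apply (p q k m : ZMod d) :
    weyl d p q k m = if k = m + q then stdAddChar (p * k - 2⁻¹ * p * q) else 0 := by
  simp only [weyl, Zmat, diagonal_pow, diagonal_mul, Xmat_pow_apply, Matrix.smul_apply,
    smul_eq_mul, natCast_zmod_val, Pi.pow_apply, omega_d_pow_val, ← AddChar.map_nsmul_eq_pow,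
    nsmul_eq_mul, mul_ite, mul_one, mul_zero, ← AddChar.map_add_eq_mul]
  ring_nf

lemma mul_Amat_apply (M : Matrix (ZMod d) (ZMod d) ℂ) (k m : ZMod d) :
    (M * Amat d) k m = M k (-m) := by
  simp [mul_apply, Amat]

lemma phasePoint_apply (p q k l : ZMod d) :
    phasePoint d p q k l = if k + l = 2 * q then stdAddChar (p * (k - l)) else 0 := by
  rw [phasePoint, mul_apply, Finset.sum_eq_single (l - q)]
  · simp only [mul_Amat_apply, conjTranspose_apply, weyl_apply, sub_add_cancel, if_true,
      ← starRingEnd_apply, ← AddChar.map_neg_eq_conj, ite_mul, zero_mul,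
      ← AddChar.map_add_eq_mul]
    refine if_congr ?_ (congrArg _ (by ring)) rfl
    constructor <;> intro h <;> linear_combination h
  · intro m _ hm
    rw [mul_Amat_apply, conjTranspose_apply, weyl_apply p q l m, if_neg, star_zero, mul_zero]
    rintro rfl
    simp at hm
  · simp

lemma sum_phasePoint_mul_phasePoint_apply (p q p' q' k : ZMod d) :
    ∑ l, phasePoint d p q k l * phasePoint d p' q' l k
      = if 2 * q = 2 * q' then stdAddChar ((k - q) * (2 * (p - p'))) else 0 := by
  rw [Finset.sum_eq_single (2 * q - k)]
  · simp only [phasePoint_apply, add_sub_cancel, if_true, sub_add_cancel, mul_ite, mul_zero,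
      ← AddChar.map_add_eq_mul]
    exact if_congr Iff.rfl (congrArg _ (by ring)) rfl
  · intro l _ hl
    rw [phasePoint_apply, if_neg, zero_mul]
    contrapose! hl
    linear_combination hl
  · simp

lemma trace_phasePoint_mul_phasePoint (p q p' q' : ZMod d) :
    (phasePoint d p q * phasePoint d p' q').trace
      = if 2 * p = 2 * p' ∧ 2 * q = 2 * q' then (d : ℂ) else 0 := by
  have hsum := AddChar.sum_mulShift (2 * (p - p')) (isPrimitive_stdAddChar d)
  rw [← Fintype.sum_equiv (Equiv.subRight q) _ _ (fun k => rfl)] at hsum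
  simp only [Matrix.trace, diag_apply, mul_apply, sum_phasePoint_mul_phasePoint_apply]
  by_cases hq : 2 * q = 2 * q'
  · simpa [hq, mul_sub, sub_eq_zero, apply_ite (Nat.cast (R := ℂ))] using hsum
  · simp [hq]

end

theorem stmt10_general (d : ℕ) [NeZero d] (hodd : Odd d) :
    (∀ p q : ZMod d, (phasePoint d p q).IsHermitian) ∧
    (∀ p q p' q' : ZMod d,
      (1 / (d : ℂ)) * (phasePoint d p q * phasePoint d p' q').trace
        = if p = p' ∧ q = q' then 1 else 0) := by
  have h2 := isUnit_two_of_odd hodd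
  refine ⟨fun p q => isHermitian_mul_mul_conjTranspose _ (Amat_isHermitian d),
    fun p q p' q' => ?_⟩
  simp only [trace_phasePoint_mul_phasePoint, h2.mul_right_inj]
  split_ifs
  · field_simp [NeZero.ne d]
  · simp

theorem stmt10 (d : ℕ) [NeZero d] (hd : d.Prime) (hodd : Odd d) :
    (∀ p q : ZMod d, (phasePoint d p q).IsHermitian) ∧
    (∀ p q p' q' : ZMod d,
      (1 / (d : ℂ)) * (phasePoint d p q * phasePoint d p' q').trace
        = if p = p' ∧ q = q' then 1 else 0) :=
  stmt10_general d hodd
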